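/- arXiv:2201.11649 — 3 statements merged into one kernel-verified Lean document; each statement's English description precedes it below -/
import Mathlib

section
/- Suppose the capacitor voltage v(t) = v̂·(−sin θ(t), cos θ(t)) and inductor current i(t) = v̂_ℓ·(−sin θ_ℓ(t), cos θ_ℓ(t)) (with v̂, v̂_ℓ > 0) satisfy C·v̇ = −G_load·v + i with constant load G_load = [[g, −b],[b, g]], g > 0, and θ̇ = ω_s ≠ 0. Then sin(θ_ℓ − θ) = (Cω_s + b)·v̂ / v̂_ℓ and cos(θ_ℓ − θ) = g·v̂ / v̂_ℓ ≠ 0, and if additionally sin(θ_ℓ − θ) is constant in time, then θ̇_ℓ = θ̇ = ω_s. -/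
/-!
Differentiating `v = v̂ (-sin θ, cos θ)` turns the capacitor equation into
`v̂_ℓ e^{iθ_ℓ} = v̂ (g + i(Cω_s + b)) e^{iθ}`, i.e. the current phasor is the voltage phasor
rotated and scaled by the complex admittance; reading this in the frame rotating with `θ` gives the
sine and cosine of `θ_ℓ - θ`. Since `cos (θ_ℓ - θ) = g v̂ / v̂_ℓ > 0`, a constant `sin (θ_ℓ - θ)`
has derivative `cos (θ_ℓ - θ) (θ̇_ℓ - ω_s) = 0`, which forces `θ̇_ℓ = ω_s`.
-/

open Real Matrix

theorem hasDerivAt_polar (a : ℝ) {θ : ℝ → ℝ} {ω t : ℝ} (h : HasDerivAt θ ω t) :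
    HasDerivAt (fun τ => (![-(a * sin (θ τ)), a * cos (θ τ)] : Fin 2 → ℝ))
      ![-(a * (cos (θ t) * ω)), a * (-sin (θ t) * ω)] t := by
  refine hasDerivAt_pi.mpr (Fin.forall_fin_two.mpr ⟨?_, ?_⟩)
  · exact (h.sin.const_mul a).fun_neg
  · simpa using h.cos.const_mul a

theorem mul_sin_cos_sub_of_rotation {r p q x y : ℝ}
    (hs : r * sin x = p * sin y + q * cos y) (hc : r * cos x = p * cos y - q * sin y) :
    r * sin (x - y) = q ∧ r * cos (x - y) = p := by
  rw [sin_sub, cos_sub]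
  constructor
  · linear_combination cos y * hs - sin y * hc + q * sin_sq_add_cos_sq y
  · linear_combination sin y * hs + cos y * hc + p * sin_sq_add_cos_sq y

theorem mul_sin_cos_of_capacitor_eq {C g b ω a r α β : ℝ} (hC : C ≠ 0)
    (h : (![-(a * (cos α * ω)), a * (-sin α * ω)] : Fin 2 → ℝ) =
      C⁻¹ • ((![-(r * sin β), r * cos β] : Fin 2 → ℝ)
        - (!![g, -b; b, g]).mulVec ![-(a * sin α), a * cos α])) :
    r * sin β = g * a * sin α + (C * ω + b) * a * cos α ∧
      r * cos β = g * a * cos α - (C * ω + b) * a * sin α := by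
  have h0 := congrFun h 0
  have h1 := congrFun h 1
  simp only [Pi.smul_apply, Pi.sub_apply, smul_eq_mul, Matrix.mulVec, dotProduct,
    Fin.sum_univ_two, Matrix.of_apply, Matrix.cons_val', Matrix.cons_val_zero, Matrix.cons_val_one,
    Matrix.empty_val', Matrix.cons_val_fin_one] at h0 h1
  rw [eq_inv_mul_iff_mul_eq₀ hC] at h0 h1
  constructor
  · linear_combination h0
  · linear_combination -h1

theorem eq_of_sin_sub_const {θ θℓ : ℝ → ℝ} {ω ωℓ t s : ℝ}
    (hθ : HasDerivAt θ ω t) (hθℓ : HasDerivAt θℓ ωℓ t)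
    (hsin : ∀ τ, sin (θℓ τ - θ τ) = s) (hcos : cos (θℓ t - θ t) ≠ 0) : ωℓ = ω := by
  have hderiv : HasDerivAt (fun τ => sin (θℓ τ - θ τ)) (cos (θℓ t - θ t) * (ωℓ - ω)) t :=
    (hθℓ.sub hθ).sin
  rw [funext hsin] at hderiv
  have hzero : cos (θℓ t - θ t) * (ωℓ - ω) = 0 := hderiv.unique (hasDerivAt_const t s)
  exact sub_eq_zero.mp ((mul_eq_zero.mp hzero).resolve_left hcos)

theorem steady_state_phase_relations_and_sync_general
    (C g b ωs vhat vl : ℝ) (hC : 0 < C) (hg : 0 < g)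
    (hvhat : 0 < vhat) (hvl : 0 < vl)
    (θ θℓ ωℓ : ℝ → ℝ)
    (hθ : ∀ t, HasDerivAt θ ωs t)
    (hθℓ : ∀ t, HasDerivAt θℓ (ωℓ t) t)
    (hcap : ∀ t, HasDerivAt
      (fun τ => (![-(vhat * Real.sin (θ τ)), vhat * Real.cos (θ τ)] : Fin 2 → ℝ))
      (C⁻¹ • ((![-(vl * Real.sin (θℓ t)), vl * Real.cos (θℓ t)] : Fin 2 → ℝ)
        - (!![g, -b; b, g]).mulVec ![-(vhat * Real.sin (θ t)), vhat * Real.cos (θ t)])) t) :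
    ∀ t, Real.sin (θℓ t - θ t) = (C * ωs + b) * vhat / vl ∧
      Real.cos (θℓ t - θ t) = g * vhat / vl ∧
      Real.cos (θℓ t - θ t) ≠ 0 ∧
      HasDerivAt θℓ ωs t := by
  have hphase : ∀ t, vl * sin (θℓ t - θ t) = (C * ωs + b) * vhat ∧
      vl * cos (θℓ t - θ t) = g * vhat := fun t =>
    let ⟨hs, hc⟩ :=
      mul_sin_cos_of_capacitor_eq hC.ne' ((hasDerivAt_polar vhat (hθ t)).unique (hcap t))
    mul_sin_cos_sub_of_rotation hs hc
  have hsin : ∀ t, sin (θℓ t - θ t) = (C * ωs + b) * vhat / vl := fun t =>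
    eq_div_of_mul_eq hvl.ne' ((mul_comm _ _).trans (hphase t).1)
  intro t
  have hcos : cos (θℓ t - θ t) = g * vhat / vl :=
    eq_div_of_mul_eq hvl.ne' ((mul_comm _ _).trans (hphase t).2)
  have hcos_ne : cos (θℓ t - θ t) ≠ 0 := by
    rw [hcos]
    positivity
  refine ⟨hsin t, hcos, hcos_ne, ?_⟩
  simpa only [eq_of_sin_sub_const (hθ t) (hθℓ t) hsin hcos_ne] using hθℓ t

/-- Phase relations at steady state of the capacitor equation with a constant load
G_load = [[g, −b],[b, g]], and synchronization of the current angle to the voltage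
frequency. -/
theorem steady_state_phase_relations_and_sync
    (C g b ωs vhat vl : ℝ) (hC : 0 < C) (hg : 0 < g) (hωs : ωs ≠ 0)
    (hvhat : 0 < vhat) (hvl : 0 < vl)
    (θ θℓ ωℓ : ℝ → ℝ)
    (hθ : ∀ t, HasDerivAt θ ωs t)
    (hθℓ : ∀ t, HasDerivAt θℓ (ωℓ t) t)
    (hcap : ∀ t, HasDerivAt
      (fun τ => (![-(vhat * Real.sin (θ τ)), vhat * Real.cos (θ τ)] : Fin 2 → ℝ))
      (C⁻¹ • ((![-(vl * Real.sin (θℓ t)), vl * Real.cos (θℓ t)] : Fin 2 → ℝ)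
        - (!![g, -b; b, g]).mulVec ![-(vhat * Real.sin (θ t)), vhat * Real.cos (θ t)])) t) :
    ∀ t, Real.sin (θℓ t - θ t) = (C * ωs + b) * vhat / vl ∧
      Real.cos (θℓ t - θ t) = g * vhat / vl ∧
      Real.cos (θℓ t - θ t) ≠ 0 ∧
      HasDerivAt θℓ ωs t :=
  steady_state_phase_relations_and_sync_general C g b ωs vhat vl hC hg hvhat hvl θ θℓ ωℓ hθ hθℓ hcap
end

section
/- Consider the error dynamics Lyapunov candidate W̃ = (1/2)C_dc·ṽ_dc² + (1/2)C·‖ṽ_dq‖² + (1/2)L·‖ĩ_dq‖² for the closed-loop converter error system in the dq frame. Its derivative along trajectories equals eᵀ P e where e = (ṽ_dc, ṽ_dq, ĩ_dq) and P = [[−G_dc, −(Cη/2)(J₂ v_{dq,s})ᵀ, −(Lη/2)(J₂ i_{dq,s})ᵀ],[−(Cη/2)J₂ v_{dq,s}, −g I₂, 0],[−(Lη/2)J₂ i_{dq,s}, 0, −R I₂]]. The symmetric matrix P is negative definite provided R·C²·η²·‖v_{dq,s}‖² + g·L²·η²·‖i_{dq,s}‖² < 4·R·G_dc·g. -/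
open Real Matrix

/-!
Completing the square in `ṽ_dq` and in `ĩ_dq` bounds `4 R g · eᵀ P e` by
`ṽ_dc² (R C² η² ‖v_s‖² + g L² η² ‖i_s‖² − 4 R G_dc g)`, since the rotation `J₂` preserves norms.
This is negative when `ṽ_dc ≠ 0`; when `ṽ_dc = 0` the form is `−g ‖ṽ_dq‖² − R ‖ĩ_dq‖²`.
-/

section DotProduct

variable {n R : Type*} [Fintype n] [CommRing R] [LinearOrder R] [IsStrictOrderedRing R]

theorem dotProduct_self_nonneg (v : n → R) : 0 ≤ v ⬝ᵥ v :=
  Finset.sum_nonneg fun i _ => mul_self_nonneg (v i)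

theorem dotProduct_self_pos {v : n → R} (hv : v ≠ 0) : 0 < v ⬝ᵥ v :=
  (dotProduct_self_nonneg v).lt_of_ne' (dotProduct_self_eq_zero.not.mpr hv)

/-- The left side minus the right side is `(2 g x + t w) ⬝ᵥ (2 g x + t w)`. -/
theorem four_mul_neg_quadratic_le (g t : R) (x w : n → R) :
    4 * g * (-g * (x ⬝ᵥ x) - t * (w ⬝ᵥ x)) ≤ t ^ 2 * (w ⬝ᵥ w) := by
  have hsq := dotProduct_self_nonneg ((2 * g) • x + t • w)
  simp only [add_dotProduct, dotProduct_add, smul_dotProduct, dotProduct_smul, smul_eq_mul,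
    dotProduct_comm x w] at hsq
  linarith

end DotProduct

theorem dotProduct_mulVec_self_of_transpose_mul_self {n R : Type*} [Fintype n] [DecidableEq n]
    [CommRing R] {A : Matrix n n R} (hA : Aᵀ * A = 1) (v : n → R) :
    (A *ᵥ v) ⬝ᵥ (A *ᵥ v) = v ⬝ᵥ v := by
  rw [dotProduct_mulVec, ← vecMul_transpose, vecMul_vecMul, hA, vecMul_one]

theorem rotation_transpose_mul_self {R : Type*} [CommRing R] :
    (!![(0 : R), -1; 1, 0])ᵀ * !![(0 : R), -1; 1, 0] = 1 := by
  ext i j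
  fin_cases i <;> fin_cases j <;> simp [mul_apply, Fin.sum_univ_two]

theorem lyapunov_matrix_negative_definite_general
    (C L Gdc R g η : ℝ)
    (hR : 0 < R)
    (hg : 0 < g)
    (vs is : Fin 2 → ℝ)
    (hcond : R * C ^ 2 * η ^ 2 * (vs ⬝ᵥ vs) + g * L ^ 2 * η ^ 2 * (is ⬝ᵥ is)
      < 4 * R * Gdc * g) :
    ∀ (a : ℝ) (vd id : Fin 2 → ℝ), ¬(a = 0 ∧ vd = 0 ∧ id = 0) →
      -Gdc * a ^ 2 - g * (vd ⬝ᵥ vd) - R * (id ⬝ᵥ id)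
        - C * η * a * ((!![(0:ℝ), -1; 1, 0]).mulVec vs ⬝ᵥ vd)
        - L * η * a * ((!![(0:ℝ), -1; 1, 0]).mulVec is ⬝ᵥ id) < 0 := by
  intro a vd id hne
  rcases eq_or_ne a 0 with rfl | ha
  · have hv := mul_nonneg hg.le (dotProduct_self_nonneg vd)
    have hi := mul_nonneg hR.le (dotProduct_self_nonneg id)
    rcases (by tauto : vd ≠ 0 ∨ id ≠ 0) with hvd | hid
    · linarith [mul_pos hg (dotProduct_self_pos hvd)]
    · linarith [mul_pos hR (dotProduct_self_pos hid)]
  · have hv := four_mul_neg_quadratic_le g (C * η * a) vd (!![(0:ℝ), -1; 1, 0] *ᵥ vs)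
    have hi := four_mul_neg_quadratic_le R (L * η * a) id (!![(0:ℝ), -1; 1, 0] *ᵥ is)
    rw [dotProduct_mulVec_self_of_transpose_mul_self rotation_transpose_mul_self] at hv hi
    refine neg_of_mul_neg_right (a := 4 * R * g) ?_ (by positivity)
    linarith [mul_le_mul_of_nonneg_left hv hR.le, mul_le_mul_of_nonneg_left hi hg.le,
      mul_lt_mul_of_pos_left hcond (pow_two_pos_of_ne_zero ha)]

/-- Negative definiteness of the Lyapunov-derivative quadratic form
eᵀ P e = −G_dc ṽ_dc² − g‖ṽ_dq‖² − R‖ĩ_dq‖² − Cη ṽ_dc (J₂ v_s)ᵀ ṽ_dq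
          − Lη ṽ_dc (J₂ i_s)ᵀ ĩ_dq
under the condition R C² η² ‖v_s‖² + g L² η² ‖i_s‖² < 4 R G_dc g. -/
theorem lyapunov_matrix_negative_definite
    (Cdc C L Gdc R g η : ℝ)
    (hCdc : 0 < Cdc) (hC : 0 < C) (hL : 0 < L) (hG : 0 < Gdc) (hR : 0 < R)
    (hg : 0 < g) (hη : 0 < η)
    (vs is : Fin 2 → ℝ)
    (hcond : R * C ^ 2 * η ^ 2 * (vs ⬝ᵥ vs) + g * L ^ 2 * η ^ 2 * (is ⬝ᵥ is)
      < 4 * R * Gdc * g) :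
    ∀ (a : ℝ) (vd id : Fin 2 → ℝ), ¬(a = 0 ∧ vd = 0 ∧ id = 0) →
      -Gdc * a ^ 2 - g * (vd ⬝ᵥ vd) - R * (id ⬝ᵥ id)
        - C * η * a * ((!![(0:ℝ), -1; 1, 0]).mulVec vs ⬝ᵥ vd)
        - L * η * a * ((!![(0:ℝ), -1; 1, 0]).mulVec is ⬝ᵥ id) < 0 :=
  lyapunov_matrix_negative_definite_general C L Gdc R g η hR hg vs is hcond
end

section
/- Under the amplitude feedback droop law μ = μ₀ + k_μ·Q_x with reactive power Q_x = −b_load·v̂_x² for a purely inductive load b_load < 0, and steady-state amplitude v̂_x = (μ₀ + k_μ Q_x)·i_dc/(2G_dc) with v_{dc,0} = i_dc/G_dc (taking P_x = 0), the quadratic k_μ·b_load·v̂_x² + 2·(G_dc/i_dc)·v̂_x − μ₀ = 0 (equivalently k_μ b_load v̂_x² + 2 v̂_x/v_{dc,0} − μ₀ = 0) has a positive real solution v̂_x if and only if b_load ≥ b_max := −1/(v_{dc,0}²·k_μ·μ₀); at b_load = b_max the solution is v̂_x = μ₀·v_{dc,0} and the corresponding reactive power equals Q_{x,max} = μ₀/k_μ.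 -/
open Real

/-- Amplitude droop feedback μ = μ₀ + k_μ Q_x for a purely inductive load:
the quadratic k_μ b v̂² + 2 v̂ / v_dc0 − μ₀ = 0 has a positive solution iff
b ≥ b_max = −1/(v_dc0² k_μ μ₀); at b = b_max the solution is v̂ = μ₀ v_dc0 with
reactive power Q_x,max = μ₀/k_μ. -/
theorem amplitude_droop_reactive_power_limits
    (μ₀ kμ idc Gdc : ℝ) (hμ₀ : 0 < μ₀) (hk : 0 < kμ) (hi : 0 < idc) (hG : 0 < Gdc) :
    (∀ b : ℝ, b < 0 →
      ((∃ v : ℝ, 0 < v ∧ kμ * b * v ^ 2 + 2 * v / (idc / Gdc) - μ₀ = 0) ↔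
        -(1 / ((idc / Gdc) ^ 2 * kμ * μ₀)) ≤ b)) ∧
    (kμ * (-(1 / ((idc / Gdc) ^ 2 * kμ * μ₀))) * (μ₀ * (idc / Gdc)) ^ 2
        + 2 * (μ₀ * (idc / Gdc)) / (idc / Gdc) - μ₀ = 0) ∧
    (-(-(1 / ((idc / Gdc) ^ 2 * kμ * μ₀))) * (μ₀ * (idc / Gdc)) ^ 2 = μ₀ / kμ) := by
  have hv0 : 0 < idc / Gdc := div_pos hi hG
  set v0 : ℝ := idc / Gdc with hv0def
  have hv0ne : v0 ≠ 0 := ne_of_gt hv0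
  refine ⟨?_, ?_, ?_⟩
  · intro b hb
    constructor
    · rintro ⟨v, hv, heq⟩
      have heq' : kμ * b * v ^ 2 * v0 + 2 * v - μ₀ * v0 = 0 := by
        field_simp at heq; linarith
      rw [neg_le, le_div_iff₀ (by positivity : (0:ℝ) < v0 ^ 2 * kμ * μ₀)]
      have key : (2 * kμ * b * v * v0 + 2) ^ 2 = 4 + 4 * kμ * b * μ₀ * v0 ^ 2 := by
        linear_combination (4 * kμ * b * v0) * heq'
      nlinarith [sq_nonneg (2 * kμ * b * v * v0 + 2)]
    · intro hble
      have ha : kμ * b < 0 := mul_neg_of_pos_of_neg hk hb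
      set D : ℝ := (2 / v0) ^ 2 + 4 * (kμ * b) * μ₀ with hD
      have hD0 : 0 ≤ D := by
        rw [neg_le, le_div_iff₀ (by positivity : (0:ℝ) < v0 ^ 2 * kμ * μ₀)] at hble
        have h4 : (0:ℝ) < v0 ^ 2 := by positivity
        have hnn : (0:ℝ) ≤ 4 + 4 * (kμ * b) * μ₀ * v0 ^ 2 := by nlinarith
        rw [hD]
        calc (0:ℝ) ≤ (4 + 4 * (kμ * b) * μ₀ * v0 ^ 2) / v0 ^ 2 :=
              div_nonneg hnn h4.le
          _ = (2 / v0) ^ 2 + 4 * (kμ * b) * μ₀ := by field_simp; ring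
      set s : ℝ := Real.sqrt D with hs
      have hs2 : s ^ 2 = D := Real.sq_sqrt hD0
      have hsnn : 0 ≤ s := Real.sqrt_nonneg D
      have hslt : s < 2 / v0 := by
        rw [hs, Real.sqrt_lt' (by positivity)]
        have : kμ * b * μ₀ < 0 := mul_neg_of_neg_of_pos ha hμ₀
        rw [hD]; linarith
      refine ⟨(2 / v0 - s) / (-2 * (kμ * b)), ?_, ?_⟩
      · apply div_pos (by linarith) (by linarith)
      · have hane : kμ * b ≠ 0 := ne_of_lt ha
        have hs2' : s ^ 2 * v0 ^ 2 = 4 + 4 * (kμ * b) * μ₀ * v0 ^ 2 := by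
          rw [hs2, hD]; field_simp; ring
        have hb0 : b ≠ 0 := ne_of_lt hb
        have hk0 : kμ ≠ 0 := ne_of_gt hk
        field_simp
        linear_combination hs2'
  · field_simp
    ring
  · field_simp
end
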